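/- For every integer p ≥ 2 and every value v ∈ {1,…,p−1}, the number of indices i ∈ {1,…,2^{p−1}} with cc_set(p)(i) = v is even (and positive). -/
import Mathlib

/-- `ccSet p` is the list `cc_set(p)` of length `2^{p−1}` with entries in `{1,…,p−1}`:
`cc_set(2) = (1,1)` and, for `p ≥ 3`, `cc_set(p)` is the concatenation of two copies of
the list obtained from `cc_set(p−1)` by replacing its `2^{p−2}`-th entry with `p−1`. -/
def ccSet : ℕ → List ℕ
  | 0 => []
  | 1 => []
  | 2 => [1, 1]
  | p + 3 =>
    let l := (ccSet (p + 2)).set (2 ^ (p + 1) - 1) (p + 2)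
    l ++ l

lemma ccSet_length : ∀ p, (ccSet (p+2)).length = 2^(p+1) := by
  intro p
  induction p with
  | zero => rfl
  | succ n ih =>
    show ((_ ++ _ : List ℕ)).length = _
    simp only [List.length_append, List.length_set, ih]
    ring

lemma count_set_aux (l : List ℕ) (n : ℕ) (h : n < l.length) (a v : ℕ) :
    (l.set n a).count v + (if l[n] = v then 1 else 0)
      = l.count v + (if a = v then 1 else 0) := by
  conv_rhs => rw [show l.count v = (l.take n ++ l[n] :: l.drop (n+1)).count v by
    rw [List.getElem_cons_drop, List.take_append_drop]]
  rw [List.set_eq_take_cons_drop a h]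
  simp only [List.count_append, List.count_cons, beq_iff_eq]
  split_ifs <;> omega

lemma ccSet_getLast : ∀ p, (ccSet (p+2))[2^(p+1)-1]? = some (p+1) := by
  intro p
  induction p with
  | zero => rfl
  | succ n ih =>
    show ((_ ++ _ : List ℕ))[2^(n+2)-1]? = _
    have hl : ((ccSet (n+2)).set (2 ^ (n + 1) - 1) (n + 2)).length = 2^(n+1) := by
      rw [List.length_set, ccSet_length]
    have h1 : (1:ℕ) ≤ 2^(n+1) := Nat.one_le_two_pow
    have hpow : (2:ℕ)^(n+2) = 2^(n+1) + 2^(n+1) := by ring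
    rw [List.getElem?_append_right (by rw [hl]; omega)]
    rw [hl]
    have heq : 2^(n+2) - 1 - 2^(n+1) = 2^(n+1) - 1 := by omega
    rw [heq]
    exact List.getElem?_set_eq_of_lt _ (by rw [ccSet_length]; omega)

lemma ccSet_mem_le : ∀ p, ∀ x ∈ ccSet (p+2), x ≤ p+1 := by
  intro p
  induction p with
  | zero => intro x hx; simp [ccSet] at hx; omega
  | succ n ih =>
    intro x hx
    rcases List.mem_append.1 hx with h | h <;>
    · rcases List.mem_or_eq_of_mem_set h with h' | h'
      · exact le_trans (ih x h') (by omega)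
      · omega

lemma ccSet_key : ∀ p v, 1 ≤ v → v ≤ p+1 →
    0 < (ccSet (p+2)).count v ∧ Even ((ccSet (p+2)).count v) := by
  intro p
  induction p with
  | zero =>
    intro v h1 h2
    have : v = 1 := by omega
    subst this
    decide
  | succ n ih =>
    intro v h1 h2
    have hcnt : (ccSet (n+1+2)).count v
        = 2 * ((ccSet (n+2)).set (2 ^ (n + 1) - 1) (n + 2)).count v := by
      show ((_ ++ _ : List ℕ)).count v = _
      rw [List.count_append]; omega
    have hlen : 2^(n+1) - 1 < (ccSet (n+2)).length := by
      rw [ccSet_length]; have : (1:ℕ) ≤ 2^(n+1) := Nat.one_le_two_pow; omega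
    have hget : (ccSet (n+2))[2^(n+1)-1]'hlen = n+1 := by
      have := ccSet_getLast n
      rw [List.getElem?_eq_getElem hlen] at this
      simpa using this
    have hset := count_set_aux (ccSet (n+2)) (2^(n+1)-1) hlen (n+2) v
    rw [hget] at hset
    have hpos : 0 < ((ccSet (n+2)).set (2 ^ (n + 1) - 1) (n + 2)).count v := by
      by_cases hv : v ≤ n + 1
      · obtain ⟨hp', he'⟩ := ih v h1 hv
        obtain ⟨r, hr⟩ := he'
        split_ifs at hset <;> omega
      · have hv2 : v = n + 2 := by omega
        have hzero : (ccSet (n+2)).count v = 0 := by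
          rw [List.count_eq_zero]
          intro hmem
          exact absurd (ccSet_mem_le n v hmem) (by omega)
        rw [hzero] at hset
        split_ifs at hset <;> omega
    refine ⟨by omega, ?_⟩
    rw [hcnt]; exact even_two_mul _

/-- for every `p ≥ 2` and every `v ∈ {1,…,p−1}`, the number of indices `i`
with `cc_set(p)(i) = v` is even and positive. -/
theorem stmt12 (p : ℕ) (hp : 2 ≤ p) (v : ℕ) (hv1 : 1 ≤ v) (hv2 : v ≤ p - 1) :
    Even ((ccSet p).count v) ∧ 0 < (ccSet p).count v := by
  obtain ⟨q, rfl⟩ := Nat.exists_eq_add_of_le hp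
  rw [show 2 + q = q + 2 by omega] at *
  obtain ⟨h1, h2⟩ := ccSet_key q v hv1 (by omega)
  exact ⟨h2, h1⟩
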